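/- arXiv:2510.23959 — 2 statements merged into one kernel-verified Lean document; each statement's English description precedes it below -/
import Mathlib

section
/- Let f : X → Y be a quasi-compact, open, surjective continuous map between spectral topological spaces. Then the Krull dimension of X is at least the Krull dimension of Y. -/
/-!
If `y ⤳ f x`, every quasi-compact open neighbourhood `U` of `x` has `y ∈ f '' U`, because
`f '' U` is an open neighbourhood of `f x`. A minimal closed subset of `f⁻¹ (closure {y})`
meeting all the quasi-compact opens `U ∩ f⁻¹ V` (with `V` a quasi-compact open neighbourhood
of `y`) exists by compactness and is irreducible by minimality; its generic point lies in every
`U ∩ f⁻¹ V`, so it generalizes `x` and lies over `y`. Thus `f` is generalizing, and a chain of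
irreducible closed subsets of `Y` lifts, from its smallest member upwards, to a chain of the same
length in `X`.
-/

open Set Topology TopologicalSpace

section Order

variable {α β : Type*} [Preorder α] [Preorder β] {f : α → β}

lemma LTSeries.exists_lift_of_fibration (hf : Monotone f) (hsurj : Function.Surjective f)
    (hfib : Relation.Fibration (· ≥ ·) (· ≥ ·) f) (p : LTSeries β) :
    ∃ q : LTSeries α, q.length = p.length ∧ f q.last = p.last := by
  induction p using RelSeries.inductionOn' with
  | singleton b =>
    obtain ⟨a, rfl⟩ := hsurj b
    exact ⟨RelSeries.singleton _ a, rfl, rfl⟩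
  | snoc p b hb ih =>
    obtain ⟨q, hlen, hlast⟩ := ih
    obtain ⟨a, hqa, rfl⟩ := hfib (hlast ▸ hb.le : f q.last ≤ b)
    have hlt : q.last < a := hqa.lt_of_not_ge fun h => (hlast ▸ hb).not_ge (hf h)
    exact ⟨q.snoc a hlt, by simp [hlen], by simp⟩

theorem Order.krullDim_le_of_fibration (hf : Monotone f) (hsurj : Function.Surjective f)
    (hfib : Relation.Fibration (· ≥ ·) (· ≥ ·) f) : krullDim β ≤ krullDim α :=
  iSup_le fun p => by
    obtain ⟨q, hlen, -⟩ := p.exists_lift_of_fibration hf hsurj hfib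
    exact hlen ▸ LTSeries.length_le_krullDim q

end Order

section Topology

variable {X Y : Type*} [TopologicalSpace X] [TopologicalSpace Y]

lemma PrespectralSpace.of_exists_isCompact_isOpen
    (h : ∀ (x : X) (U : Set X), IsOpen U → x ∈ U →
      ∃ V : Set X, IsOpen V ∧ IsCompact V ∧ x ∈ V ∧ V ⊆ U) :
    PrespectralSpace X :=
  ⟨isTopologicalBasis_of_isOpen_of_nhds (fun _ hV => hV.1) fun x U hx hU =>
    let ⟨V, hVo, hVc, hxV, hVU⟩ := h x U hU hx
    ⟨V, ⟨hVo, hVc⟩, hxV, hVU⟩⟩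

lemma IsCompact.nonempty_inter_sInter_of_directedOn {s : Set X} (hs : IsCompact s)
    {t : Set (Set X)} (htne : t.Nonempty) (htd : DirectedOn (· ⊇ ·) t)
    (htc : ∀ a ∈ t, IsClosed a) (hst : ∀ a ∈ t, (s ∩ a).Nonempty) : (s ∩ ⋂₀ t).Nonempty := by
  have := htne.to_subtype
  by_contra h
  rw [not_nonempty_iff_eq_empty, sInter_eq_iInter] at h
  obtain ⟨a, ha⟩ := hs.elim_directed_family_closed (fun a : t => a.1) (fun a => htc a a.2) h
    (directedOn_iff_directed.1 htd)
  exact (hst a a.2).ne_empty ha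

lemma isIrreducible_of_minimal_closed_meeting {𝒦 : Set (Set X)} (h𝒦 : 𝒦.Nonempty)
    (hdir : DirectedOn (· ⊇ ·) 𝒦) {m : Set X}
    (hm : Minimal (fun F => IsClosed F ∧ ∀ K ∈ 𝒦, (F ∩ K).Nonempty) m) : IsIrreducible m := by
  obtain ⟨hm_closed, hm_meet⟩ := hm.prop
  have inside_of_meets : ∀ u, IsOpen u → (m ∩ u).Nonempty → ∃ K ∈ 𝒦, m ∩ K ⊆ u := by
    rintro u hu ⟨z, hzm, hzu⟩
    by_contra! h
    have hsub : m ⊆ m ∩ uᶜ := hm.le_of_le ⟨hm_closed.inter hu.isClosed_compl, fun K hK => by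
      obtain ⟨w, ⟨hwm, hwK⟩, hwu⟩ := not_subset.1 (h K hK)
      exact ⟨w, ⟨hwm, hwu⟩, hwK⟩⟩ inter_subset_left
    exact (hsub hzm).2 hzu
  obtain ⟨K, hK⟩ := h𝒦
  refine ⟨(hm_meet K hK).mono inter_subset_left, fun u v hu hv hmu hmv => ?_⟩
  obtain ⟨K₁, hK₁, hu'⟩ := inside_of_meets u hu hmu
  obtain ⟨K₂, hK₂, hv'⟩ := inside_of_meets v hv hmv
  obtain ⟨K₃, hK₃, h₁, h₂⟩ := hdir K₁ hK₁ K₂ hK₂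
  obtain ⟨z, hzm, hzK⟩ := hm_meet K₃ hK₃
  exact ⟨z, hzm, hu' ⟨hzm, h₁ hzK⟩, hv' ⟨hzm, h₂ hzK⟩⟩

theorem QuasiSober.nonempty_inter_sInter_of_directedOn [QuasiSober X] {C : Set X}
    (hC : IsClosed C) {𝒦 : Set (Set X)} (h𝒦 : 𝒦.Nonempty) (hdir : DirectedOn (· ⊇ ·) 𝒦)
    (hopen : ∀ K ∈ 𝒦, IsOpen K) (hcpt : ∀ K ∈ 𝒦, IsCompact K)
    (hmeet : ∀ K ∈ 𝒦, (C ∩ K).Nonempty) : (C ∩ ⋂₀ 𝒦).Nonempty := by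
  set S := {F | IsClosed F ∧ ∀ K ∈ 𝒦, (F ∩ K).Nonempty}
  have hchain_bound : ∀ c ⊆ S, IsChain (· ⊆ ·) c → c.Nonempty → ∃ lb ∈ S, ∀ F ∈ c, lb ⊆ F := by
    refine fun c hc hchain hcne => ⟨⋂₀ c, ⟨isClosed_sInter fun F hF => (hc hF).1, fun K hK => ?_⟩,
      fun F hF => sInter_subset_of_mem hF⟩
    simpa only [inter_comm K] using (hcpt K hK).nonempty_inter_sInter_of_directedOn hcne
      (hchain.symm.directedOn (r := fun a b : Set X => a ⊇ b)) (fun F hF => (hc hF).1)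
      (fun F hF => by simpa only [inter_comm K] using (hc hF).2 K hK)
  obtain ⟨m, hmC, hm⟩ := zorn_superset_nonempty S hchain_bound C ⟨hC, hmeet⟩
  obtain ⟨z, hz⟩ := QuasiSober.sober (isIrreducible_of_minimal_closed_meeting h𝒦 hdir hm) hm.prop.1
  exact ⟨z, hmC hz.mem, mem_sInter.2 fun K hK => (hz.mem_open_set_iff (hopen K hK)).2
    (hm.prop.2 K hK)⟩

lemma QuasiSeparatedSpace.isOpen_isCompact_inter [QuasiSeparatedSpace X] {U V : Set X}
    (hU : IsOpen U ∧ IsCompact U) (hV : IsOpen V ∧ IsCompact V) :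
    IsOpen (U ∩ V) ∧ IsCompact (U ∩ V) :=
  ⟨hU.1.inter hV.1, QuasiSeparatedSpace.inter_isCompact _ _ hU.1 hU.2 hV.1 hV.2⟩

theorem IsSpectralMap.generalizingMap [QuasiSober X] [QuasiSeparatedSpace X] [PrespectralSpace X]
    [T0Space Y] [QuasiSeparatedSpace Y] [PrespectralSpace Y] {f : X → Y} (hf : IsSpectralMap f)
    (hfo : IsOpenMap f) : GeneralizingMap f := by
  intro x y hyx
  have hX := PrespectralSpace.isTopologicalBasis.nhds_hasBasis (a := x)
  have hY := PrespectralSpace.isTopologicalBasis.nhds_hasBasis (a := y)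
  set NX := {U : Set X | (IsOpen U ∧ IsCompact U) ∧ x ∈ U}
  set NY := {V : Set Y | (IsOpen V ∧ IsCompact V) ∧ y ∈ V}
  have hNX : NX.Nonempty := hX.ex_mem
  have hNY : NY.Nonempty := hY.ex_mem
  have hcompactOpen : ∀ U ∈ NX, ∀ V ∈ NY, IsOpen (U ∩ f ⁻¹' V) ∧ IsCompact (U ∩ f ⁻¹' V) :=
    fun U hU V hV => QuasiSeparatedSpace.isOpen_isCompact_inter hU.1
      ⟨hV.1.1.preimage hf.continuous, hf.isCompact_preimage_of_isOpen hV.1.1 hV.1.2⟩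
  have hdir : DirectedOn (· ⊇ ·) (image2 (fun U V => U ∩ f ⁻¹' V) NX NY) := by
    rintro _ ⟨U₁, hU₁, V₁, hV₁, rfl⟩ _ ⟨U₂, hU₂, V₂, hV₂, rfl⟩
    refine ⟨_, mem_image2_of_mem
      (⟨QuasiSeparatedSpace.isOpen_isCompact_inter hU₁.1 hU₂.1, hU₁.2, hU₂.2⟩ : U₁ ∩ U₂ ∈ NX)
      (⟨QuasiSeparatedSpace.isOpen_isCompact_inter hV₁.1 hV₂.1, hV₁.2, hV₂.2⟩ : V₁ ∩ V₂ ∈ NY),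
      inter_subset_inter inter_subset_left (preimage_mono inter_subset_left),
      inter_subset_inter inter_subset_right (preimage_mono inter_subset_right)⟩
  have hmeet : ∀ U ∈ NX, ∀ V ∈ NY, (f ⁻¹' closure {y} ∩ (U ∩ f ⁻¹' V)).Nonempty := by
    intro U hU V hV
    obtain ⟨u, hu, rfl⟩ := hyx.mem_open (hfo U hU.1.1) (mem_image_of_mem f hU.2)
    exact ⟨u, subset_closure rfl, hu, hV.2⟩
  obtain ⟨z, hzy, hz⟩ := QuasiSober.nonempty_inter_sInter_of_directedOn
    (isClosed_closure.preimage hf.continuous) (hNX.image2 hNY) hdir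
    (forall_mem_image2.2 fun U hU V hV => (hcompactOpen U hU V hV).1)
    (forall_mem_image2.2 fun U hU V hV => (hcompactOpen U hU V hV).2)
    (forall_mem_image2.2 hmeet)
  rw [mem_sInter, forall_mem_image2] at hz
  obtain ⟨U₀, hU₀⟩ := hNX
  obtain ⟨V₀, hV₀⟩ := hNY
  have hfz : f z ⤳ y := hY.specializes_iff.2 fun V hV => (hz U₀ hU₀ V hV).2
  exact ⟨z, hX.specializes_iff.2 fun U hU => (hz U hU V₀ hV₀).1,
    (hfz.antisymm (specializes_iff_mem_closure.2 hzy)).eq⟩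

namespace TopologicalSpace.IrreducibleCloseds

def closureSingleton (x : X) : IrreducibleCloseds X :=
  ⟨closure {x}, isIrreducible_singleton.closure, isClosed_closure⟩

variable {f : X → Y} (hf : Continuous f)
include hf

lemma map_closureSingleton_eq {x : X} {T : IrreducibleCloseds Y}
    (hT : IsGenericPoint (f x) T) : map f hf (closureSingleton x) = T :=
  IrreducibleCloseds.ext ((isGenericPoint_closure.image hf).def.symm.trans hT.def)

lemma map_surjective [QuasiSober Y] (hsurj : Function.Surjective f) :
    Function.Surjective (map f hf) := by
  intro T
  obtain ⟨y, hy⟩ := QuasiSober.sober T.isIrreducible T.isClosed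
  obtain ⟨x, rfl⟩ := hsurj y
  exact ⟨closureSingleton x, map_closureSingleton_eq hf hy⟩

lemma fibration_map [QuasiSober X] [QuasiSober Y] (hgen : GeneralizingMap f) :
    Relation.Fibration (· ≥ ·) (· ≥ ·) (map f hf) := by
  intro Z T hZT
  obtain ⟨x, hx⟩ := QuasiSober.sober Z.isIrreducible Z.isClosed
  obtain ⟨y, hy⟩ := QuasiSober.sober T.isIrreducible T.isClosed
  obtain ⟨x', hx'x, rfl⟩ := hgen (hy.specializes (hZT ((hx.image hf).mem)))
  refine ⟨closureSingleton x', ?_, map_closureSingleton_eq hf hy⟩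
  show (Z : Set X) ⊆ closure {x'}
  rw [← hx.def]
  exact specializes_iff_closure_subset.1 hx'x

end TopologicalSpace.IrreducibleCloseds

end Topology

theorem stmt_3_general {X Y : Type*} [TopologicalSpace X] [TopologicalSpace Y]
    [QuasiSober X] [QuasiSeparatedSpace X]
    [QuasiSober Y] [T0Space Y] [QuasiSeparatedSpace Y]
    (hbaseX : ∀ (x : X) (U : Set X), IsOpen U → x ∈ U →
      ∃ V : Set X, IsOpen V ∧ IsCompact V ∧ x ∈ V ∧ V ⊆ U)
    (hbaseY : ∀ (y : Y) (U : Set Y), IsOpen U → y ∈ U →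
      ∃ V : Set Y, IsOpen V ∧ IsCompact V ∧ y ∈ V ∧ V ⊆ U)
    (f : X → Y) (hf : Continuous f)
    (hqc : ∀ U : Set Y, IsOpen U → IsCompact U → IsCompact (f ⁻¹' U))
    (hopen : IsOpenMap f) (hsurj : Function.Surjective f) :
    topologicalKrullDim Y ≤ topologicalKrullDim X := by
  have := PrespectralSpace.of_exists_isCompact_isOpen hbaseX
  have := PrespectralSpace.of_exists_isCompact_isOpen hbaseY
  have hgen : GeneralizingMap f := IsSpectralMap.generalizingMap ⟨hf, fun U => hqc U⟩ hopen
  exact Order.krullDim_le_of_fibration (IrreducibleCloseds.map_mono hf)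
    (IrreducibleCloseds.map_surjective hf hsurj) (IrreducibleCloseds.fibration_map hf hgen)

/-- Let `f : X → Y` be a quasi-compact, open, surjective continuous map between spectral
topological spaces. Then the Krull dimension of `X` is at least the Krull dimension of `Y`.
Spectral means: sober (`QuasiSober` + `T0Space`), quasi-compact (`CompactSpace`),
quasi-separated (`QuasiSeparatedSpace`), and the quasi-compact opens form a base. -/
theorem stmt_3 {X Y : Type*} [TopologicalSpace X] [TopologicalSpace Y]
    [QuasiSober X] [T0Space X] [CompactSpace X] [QuasiSeparatedSpace X]
    [QuasiSober Y] [T0Space Y] [CompactSpace Y] [QuasiSeparatedSpace Y]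
    (hbaseX : ∀ (x : X) (U : Set X), IsOpen U → x ∈ U →
      ∃ V : Set X, IsOpen V ∧ IsCompact V ∧ x ∈ V ∧ V ⊆ U)
    (hbaseY : ∀ (y : Y) (U : Set Y), IsOpen U → y ∈ U →
      ∃ V : Set Y, IsOpen V ∧ IsCompact V ∧ y ∈ V ∧ V ⊆ U)
    (f : X → Y) (hf : Continuous f)
    (hqc : ∀ U : Set Y, IsOpen U → IsCompact U → IsCompact (f ⁻¹' U))
    (hopen : IsOpenMap f) (hsurj : Function.Surjective f) :
    topologicalKrullDim Y ≤ topologicalKrullDim X :=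
  stmt_3_general hbaseX hbaseY f hf hqc hopen hsurj
end

section
/- Let {Xᵢ}_{i∈I} be a cofiltered system of spectral spaces whose transition maps are surjective, quasi-compact and closed, and let X = lim Xᵢ. Then the Krull dimension of X equals the supremum of the Krull dimensions of the Xᵢ. -/
/-!
A chain of irreducible closed subsets of the limit is already strictly separated by a single
projection `πᵢ`, because the closure of any set `C` of the limit is `⋂ᵢ πᵢ⁻¹ (closure (πᵢ C))` and
the index set is directed; this gives `dim X ≤ sup dim Xᵢ`. Conversely each `πᵢ` is closed and
surjective, and such a map onto a quasi-sober space lifts chains of irreducible closed sets through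
their generic points, so `dim Xᵢ ≤ dim X`.

Both properties of `πᵢ` come from one lifting statement: if `y ∈ Xᵢ` and `(Bⱼ)` is a closed
subsystem all of whose members meet the fibres over `y`, then some thread through `y` lies in
`(Bⱼ)`. Since preimages of quasi-compact opens are quasi-compact, the fibre condition survives
directed intersections, so by Zorn there is a minimal such subsystem `(Aⱼ)`. Minimality forces the
transition maps to be surjective on `(Aⱼ)` and every `Aⱼ` to be irreducible, and then the generic
points of the `Aⱼ` form the thread.
-/

open Set Topology Filter Order TopologicalSpace

theorem IsClosedMap.mem_image_iInter_of_directed {Y Z κ : Type*} [TopologicalSpace Y]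
    [TopologicalSpace Z] [Nonempty κ] {g : Y → Z} (hg : IsClosedMap g) {z : Z}
    (hz : ∀ U, IsOpen U → z ∈ U → ∃ V ⊆ U, z ∈ V ∧ IsCompact (g ⁻¹' V))
    {A : κ → Set Y} (hA : ∀ k, IsClosed (A k)) (hdir : Directed (· ⊇ ·) A)
    (hzA : ∀ k, z ∈ g '' A k) : z ∈ g '' ⋂ k, A k := by
  by_contra hz'
  obtain ⟨V, hVU, hzV, hV⟩ := hz _ (hg _ (isClosed_iInter hA)).isOpen_compl hz'
  have hVA : g ⁻¹' V ∩ ⋂ k, A k = ∅ :=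
    eq_empty_of_forall_notMem fun y hy ↦ hVU hy.1 ⟨y, hy.2, rfl⟩
  obtain ⟨k, hk⟩ := hV.elim_directed_family_closed A hA hVA hdir
  obtain ⟨y, hy, rfl⟩ := hzA k
  exact hk.subset ⟨hzV, hy⟩

theorem Order.krullDim_le_of_surjective_of_lift {α β : Type*} [Preorder α] [Preorder β]
    {ψ : α → β} (hψ : Monotone ψ) (hsurj : Function.Surjective ψ)
    (hlift : ∀ a b, b ≤ ψ a → ∃ a' ≤ a, ψ a' = b) : krullDim β ≤ krullDim α := by
  have key (p : LTSeries β) : ∀ a, p.last ≤ ψ a → (p.length : ℕ∞) ≤ height a := by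
    induction p using RelSeries.inductionOn' with
    | singleton => simp
    | snoc p b hlt ih =>
      intro a hba
      rw [RelSeries.last_snoc] at hba
      obtain ⟨a', ha'a, hψa'⟩ := hlift a p.last (hlt.le.trans hba)
      have ha' : a' < a := ha'a.lt_of_not_ge fun h ↦ (hlt.trans_le hba).not_ge (hψa' ▸ hψ h)
      calc ((p.snoc b hlt).length : ℕ∞) = p.length + 1 := by simp
        _ ≤ height a' + 1 := by gcongr; exact ih a' hψa'.ge
        _ ≤ height a := height_add_one_le ha'
  rw [krullDim_eq_iSup_height]
  refine iSup_le fun b ↦ ?_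
  obtain ⟨a, rfl⟩ := hsurj b
  exact (WithBot.coe_le_coe.2 (height_le fun p hp ↦ key p a hp.le)).trans (height_le_krullDim a)

theorem IsClosedMap.topologicalKrullDim_le {Y Z : Type*} [TopologicalSpace Y]
    [TopologicalSpace Z] [QuasiSober Z] {g : Y → Z} (hg : IsClosedMap g) (hcont : Continuous g)
    (hsurj : Function.Surjective g) : topologicalKrullDim Z ≤ topologicalKrullDim Y := by
  let pt (y : Y) : IrreducibleCloseds Y :=
    ⟨closure {y}, isIrreducible_singleton.closure, isClosed_closure⟩
  have exists_pt (B : IrreducibleCloseds Z) {s : Set Y} (hB : (B : Set Z) ⊆ g '' s) :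
      ∃ y ∈ s, IrreducibleCloseds.map g hcont (pt y) = B := by
    have hgen := B.isIrreducible.isGenericPoint_genericPoint B.isClosed
    obtain ⟨y, hy, hgy⟩ := hB hgen.mem
    refine ⟨y, hy, IrreducibleCloseds.ext ?_⟩
    simp only [IrreducibleCloseds.coe_map, pt, IrreducibleCloseds.coe_mk,
      closure_image_closure hcont, image_singleton, hgy]
    exact hgen
  refine krullDim_le_of_surjective_of_lift (IrreducibleCloseds.map_mono hcont)
    (fun B ↦ ?_) fun A B hBA ↦ ?_
  · obtain ⟨y, -, h⟩ := exists_pt B (s := univ) (by simp [hsurj.range_eq])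
    exact ⟨_, h⟩
  · have hBA : (B : Set Z) ⊆ closure (g '' A) := hBA
    rw [(hg _ A.isClosed).closure_eq] at hBA
    obtain ⟨y, hy, h⟩ := exists_pt B hBA
    exact ⟨pt y, closure_minimal (singleton_subset_iff.2 hy) A.isClosed, h⟩

section

variable {ι : Type*} [Preorder ι] {X : ι → Type*}

abbrev InverseLimit (f : ∀ ⦃i j : ι⦄, i ≤ j → X j → X i) : Type _ :=
  {u : ∀ j, X j // ∀ ⦃j k : ι⦄ (h : j ≤ k), f h (u k) = u j}

variable {f : ∀ ⦃i j : ι⦄, i ≤ j → X j → X i}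

namespace InverseLimit

def π (i : ι) (u : InverseLimit f) : X i := u.1 i

theorem map_π {i j : ι} (h : i ≤ j) (u : InverseLimit f) : f h (π j u) = π i u := u.2 h

theorem image_image_π {i j : ι} (h : i ≤ j) (C : Set (InverseLimit f)) :
    f h '' (π j '' C) = π i '' C := by
  simp only [image_image, map_π]

end InverseLimit

/-- Minimality of a closed subsystem `A` against `stableImage f A Z` forces the transition maps to
be surjective on `A` (for `Z = univ`) and the members of `A` to be irreducible (for closed `Z`). -/
def stableImage (f : ∀ ⦃i j : ι⦄, i ≤ j → X j → X i) (A : ∀ j, Set (X j)) {j₀ : ι}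
    (Z : Set (X j₀)) (j : ι) : Set (X j) :=
  ⋂ k : {k // j ≤ k ∧ j₀ ≤ k}, f k.2.1 '' (A k ∩ f k.2.2 ⁻¹' Z)

theorem stableImage_subset_image {A : ∀ j, Set (X j)} {j₀ j k : ι} (Z : Set (X j₀))
    (h : j ≤ k) (h₀ : j₀ ≤ k) : stableImage f A Z j ⊆ f h '' (A k ∩ f h₀ ⁻¹' Z) :=
  iInter_subset_of_subset ⟨k, h, h₀⟩ subset_rfl

theorem image_inter_preimage_subset_of_le [InverseSystem f] {A : ∀ j, Set (X j)}
    (hA : ∀ ⦃j k : ι⦄ (h : j ≤ k), MapsTo (f h) (A k) (A j)) {j₀ j k m : ι} (Z : Set (X j₀))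
    (hjk : j ≤ k) (hkm : k ≤ m) (h₀ : j₀ ≤ k) :
    f (hjk.trans hkm) '' (A m ∩ f (h₀.trans hkm) ⁻¹' Z) ⊆ f hjk '' (A k ∩ f h₀ ⁻¹' Z) := by
  rintro _ ⟨a, ⟨ha, haZ⟩, rfl⟩
  refine ⟨f hkm a, ⟨hA hkm ha, ?_⟩, InverseSystem.map_map hjk hkm a⟩
  rwa [mem_preimage, InverseSystem.map_map (f := f)]

theorem stableImage_subset [IsDirected ι (· ≤ ·)] {A : ∀ j, Set (X j)}
    (hA : ∀ ⦃j k : ι⦄ (h : j ≤ k), MapsTo (f h) (A k) (A j)) {j₀ : ι} (Z : Set (X j₀))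
    (j : ι) : stableImage f A Z j ⊆ A j := by
  obtain ⟨k, hjk, hj₀k⟩ := exists_ge_ge j j₀
  exact (stableImage_subset_image Z hjk hj₀k).trans
    ((hA hjk).mono_left inter_subset_left).image_subset

variable [∀ i, TopologicalSpace (X i)]

namespace InverseLimit

theorem continuous_π (i : ι) : Continuous (π (f := f) i) :=
  (continuous_apply i).comp continuous_subtype_val

theorem nhds_eq_iInf (u : InverseLimit f) : 𝓝 u = ⨅ j, comap (π j) (𝓝 (π j u)) := by
  rw [nhds_induced, nhds_pi, Filter.pi, comap_iInf]
  simp only [comap_comap]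
  rfl

variable [IsDirected ι (· ≤ ·)] [Nonempty ι] (hcont : ∀ ⦃i j : ι⦄ (h : i ≤ j), Continuous (f h))
include hcont

theorem mem_nhds_iff {u : InverseLimit f} {W : Set (InverseLimit f)} :
    W ∈ 𝓝 u ↔ ∃ j, ∃ t ∈ 𝓝 (π j u), π j ⁻¹' t ⊆ W := by
  have hdir : Directed (· ≥ ·) fun j ↦ comap (π (f := f) j) (𝓝 (π j u)) := by
    refine directed_of_isDirected_le fun i j h ↦ ?_
    have hπ : π i = f h ∘ π (f := f) j := funext fun v ↦ (map_π h v).symm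
    rw [hπ, ← comap_comap]
    exact comap_mono (hcont h).continuousAt.le_comap
  simp only [nhds_eq_iInf, mem_iInf_of_directed hdir, mem_comap]

theorem closure_eq_iInter (C : Set (InverseLimit f)) :
    closure C = ⋂ j, π j ⁻¹' closure (π j '' C) := by
  refine (subset_iInter fun j ↦ closure_subset_preimage_closure_image (continuous_π j)).antisymm
    fun u hu ↦ mem_closure_iff_nhds.2 fun W hW ↦ ?_
  obtain ⟨j, t, ht, htW⟩ := (mem_nhds_iff hcont).1 hW
  obtain ⟨_, htj, c, hc, rfl⟩ := mem_closure_iff_nhds.1 (mem_iInter.1 hu j) t ht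
  exact ⟨c, htW htj, hc⟩

theorem eventually_closure_image_π_ne {A B : Set (InverseLimit f)} (hA : IsClosed A)
    (hB : IsClosed B) (hAB : A ≠ B) : ∀ᶠ j in atTop, closure (π j '' A) ≠ closure (π j '' B) := by
  obtain ⟨i, hi⟩ : ∃ i, closure (π i '' A) ≠ closure (π i '' B) := by
    by_contra! h
    rw [← hA.closure_eq, ← hB.closure_eq, closure_eq_iInter hcont, closure_eq_iInter hcont] at hAB
    simp only [h, ne_eq, not_true_eq_false] at hAB
  refine eventually_atTop.2 ⟨i, fun j hij hj ↦ hi ?_⟩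
  rw [← image_image_π hij, ← image_image_π hij, ← closure_image_closure (hcont hij), hj,
    closure_image_closure (hcont hij)]

theorem topologicalKrullDim_le_iSup :
    topologicalKrullDim (InverseLimit f) ≤ ⨆ i, topologicalKrullDim (X i) := by
  refine iSup_le fun p ↦ ?_
  obtain ⟨m, hm⟩ := (eventually_all.2 fun k : Fin p.length ↦
    eventually_closure_image_π_ne hcont (p k.castSucc).isClosed (p k.succ).isClosed
      fun h ↦ (p.step k).ne (IrreducibleCloseds.ext h)).exists
  let q : LTSeries (IrreducibleCloseds (X m)) :=
    ⟨p.length, fun k ↦ IrreducibleCloseds.map (π m) (continuous_π m) (p k), fun k ↦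
      (IrreducibleCloseds.map_mono _ (p.step k).le).lt_of_ne fun h ↦ hm k (congrArg SetLike.coe h)⟩
  exact q.length_le_krullDim.trans (le_iSup (fun i ↦ topologicalKrullDim (X i)) m)

end InverseLimit

structure IsClosedSubsystemOver (f : ∀ ⦃i j : ι⦄, i ≤ j → X j → X i) {i : ι} (y : X i)
    (A : ∀ j, Set (X j)) : Prop where
  isClosed (j : ι) : IsClosed (A j)
  mapsTo ⦃j k : ι⦄ (h : j ≤ k) : MapsTo (f h) (A k) (A j)
  mem_image ⦃j : ι⦄ (h : i ≤ j) : y ∈ f h '' A j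

namespace IsClosedSubsystemOver

variable {i : ι} {y : X i} (hclosed : ∀ ⦃i j : ι⦄ (h : i ≤ j), IsClosedMap (f h))
  (hy : ∀ ⦃j⦄ (h : i ≤ j) U, IsOpen U → y ∈ U → ∃ V ⊆ U, y ∈ V ∧ IsCompact (f h ⁻¹' V))
include hclosed hy

theorem iInter_of_directed {κ : Type*} [Nonempty κ] {A : κ → ∀ j, Set (X j)}
    (hA : ∀ k, IsClosedSubsystemOver f y (A k)) (hdir : Directed (· ≥ ·) A) :
    IsClosedSubsystemOver f y fun j ↦ ⋂ k, A k j where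
  isClosed j := isClosed_iInter fun k ↦ (hA k).isClosed j
  mapsTo _ _ h := mapsTo_iInter_iInter fun k ↦ (hA k).mapsTo h
  mem_image j h := (hclosed h).mem_image_iInter_of_directed (hy h) (fun k ↦ (hA k).isClosed j)
    (Directed.mono_comp (· ≥ ·) (g := fun B ↦ B j) (fun _ _ hAB ↦ Pi.le_def.1 hAB j) hdir)
    fun k ↦ (hA k).mem_image h

theorem exists_minimal {B : ∀ j, Set (X j)} (hB : IsClosedSubsystemOver f y B) :
    ∃ A ≤ B, Minimal (IsClosedSubsystemOver f y) A := by
  obtain ⟨A, hAB, hA⟩ := zorn_le_nonempty₀ (α := (∀ j, Set (X j))ᵒᵈ)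
    {A | IsClosedSubsystemOver f y (OrderDual.ofDual A)} (fun c hcS hc A hA ↦
      have : Nonempty c := ⟨⟨A, hA⟩⟩
      ⟨_, iInter_of_directed hclosed hy (fun A ↦ hcS A.2) hc.directedOn.directed_val,
        fun A hA j ↦ iInter_subset_of_subset ⟨A, hA⟩ subset_rfl⟩)
    (OrderDual.toDual B) hB
  exact ⟨A, hAB, hA.1, fun A' hA' hA'A ↦ hA.2 hA' hA'A⟩

variable [InverseSystem f] [IsDirected ι (· ≤ ·)]
  (hcont : ∀ ⦃i j : ι⦄ (h : i ≤ j), Continuous (f h))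
include hcont

theorem stableImage {A : ∀ j, Set (X j)} (hA : IsClosedSubsystemOver f y A) {j₀ : ι}
    {Z : Set (X j₀)} (hZ : IsClosed Z)
    (hyZ : ∀ k (h : i ≤ k) (h₀ : j₀ ≤ k), y ∈ f h '' (A k ∩ f h₀ ⁻¹' Z)) :
    IsClosedSubsystemOver f y (stableImage f A Z) where
  isClosed j := isClosed_iInter fun k ↦
    hclosed _ _ ((hA.isClosed k).inter (hZ.preimage (hcont _)))
  mapsTo j j' h := by
    rintro _ hb
    refine mem_iInter.2 fun k ↦ ?_
    obtain ⟨m, hkm, hj'm⟩ := exists_ge_ge k.1 j'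
    obtain ⟨a, ha, rfl⟩ := stableImage_subset_image Z hj'm (k.2.2.trans hkm) hb
    rw [InverseSystem.map_map (f := f)]
    exact image_inter_preimage_subset_of_le hA.mapsTo Z k.2.1 hkm k.2.2 (mem_image_of_mem _ ha)
  mem_image j h := by
    have : Nonempty {k // j ≤ k ∧ j₀ ≤ k} := let ⟨k, hk⟩ := exists_ge_ge j j₀; ⟨⟨k, hk⟩⟩
    refine (hclosed h).mem_image_iInter_of_directed (hy h)
      (fun k ↦ hclosed _ _ ((hA.isClosed k).inter (hZ.preimage (hcont _)))) (fun k k' ↦ ?_)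
      fun k ↦ ?_
    · obtain ⟨m, hkm, hk'm⟩ := exists_ge_ge k.1 k'.1
      exact ⟨⟨m, k.2.1.trans hkm, k.2.2.trans hkm⟩,
        image_inter_preimage_subset_of_le hA.mapsTo Z k.2.1 hkm k.2.2,
        image_inter_preimage_subset_of_le hA.mapsTo Z k'.2.1 hk'm k'.2.2⟩
    · rw [image_image]
      simp only [InverseSystem.map_map (f := f)]
      exact hyZ k (h.trans k.2.1) k.2.2

variable {A : ∀ j, Set (X j)} (hA : Minimal (IsClosedSubsystemOver f y) A)
include hA

theorem surjOn_of_minimal {j k : ι} (h : j ≤ k) : SurjOn (f h) (A k) (A j) := by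
  have hle := hA.2 (hA.1.stableImage hclosed hy hcont (Z := (univ : Set (X k))) isClosed_univ
    fun k' h' _ ↦ by simpa using hA.1.mem_image h') (stableImage_subset hA.1.mapsTo univ)
  exact (hle j).trans ((stableImage_subset_image univ h le_rfl).trans
    (image_mono inter_subset_left))

theorem subset_of_minimal {j₀ : ι} (hi : i ≤ j₀) {Z : Set (X j₀)} (hZ : IsClosed Z)
    (hyZ : y ∈ f hi '' (A j₀ ∩ Z)) : A j₀ ⊆ Z := by
  have hyZ' (k : ι) (h : i ≤ k) (h₀ : j₀ ≤ k) : y ∈ f h '' (A k ∩ f h₀ ⁻¹' Z) := by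
    obtain ⟨c, ⟨hcA, hcZ⟩, rfl⟩ := hyZ
    obtain ⟨b, hb, rfl⟩ := surjOn_of_minimal hclosed hy hcont hA h₀ hcA
    exact ⟨b, ⟨hb, hcZ⟩, (InverseSystem.map_map hi h₀ b).symm⟩
  have hle := hA.2 (hA.1.stableImage hclosed hy hcont hZ hyZ') (stableImage_subset hA.1.mapsTo Z)
  intro a ha
  obtain ⟨b, ⟨-, hbZ⟩, rfl⟩ := stableImage_subset_image Z le_rfl le_rfl (hle j₀ ha)
  exact hbZ

theorem isIrreducible_of_minimal (j : ι) : IsIrreducible (A j) := by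
  obtain ⟨k, hik, hjk⟩ := exists_ge_ge i j
  rw [← (hA.1.mapsTo hjk).image_subset.antisymm (surjOn_of_minimal hclosed hy hcont hA hjk)]
  refine IsIrreducible.image ?_ _ (hcont hjk).continuousOn
  obtain ⟨a, ha, hay⟩ := hA.1.mem_image hik
  refine ⟨⟨a, ha⟩, isPreirreducible_iff_isClosed_union_isClosed.2 fun Z₁ Z₂ hZ₁ hZ₂ hAZ ↦ ?_⟩
  exact (hAZ ha).imp (fun h₁ ↦ subset_of_minimal hclosed hy hcont hA hik hZ₁ ⟨a, ⟨ha, h₁⟩, hay⟩)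
    fun h₂ ↦ subset_of_minimal hclosed hy hcont hA hik hZ₂ ⟨a, ⟨ha, h₂⟩, hay⟩

theorem isGenericPoint_of_minimal : IsGenericPoint y (A i) := by
  have hyA : y ∈ A i := by
    simpa only [InverseSystem.map_self, image_id'] using hA.1.mem_image le_rfl
  exact (closure_minimal (singleton_subset_iff.2 hyA) (hA.1.isClosed i)).antisymm
    (subset_of_minimal hclosed hy hcont hA le_rfl isClosed_closure
      ⟨y, ⟨hyA, subset_closure rfl⟩, InverseSystem.map_self y⟩)

theorem exists_inverseLimit_of_minimal [∀ j, QuasiSober (X j)] [∀ j, T0Space (X j)] :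
    ∃ u : InverseLimit f, InverseLimit.π i u = y ∧ ∀ j, InverseLimit.π j u ∈ A j := by
  have hirr := isIrreducible_of_minimal hclosed hy hcont hA
  have hgen (j : ι) := (hirr j).isGenericPoint_genericPoint (hA.1.isClosed j)
  refine ⟨⟨fun j ↦ (hirr j).genericPoint, fun j k h ↦ ((hgen k).image (hcont h)).eq ?_⟩,
    (hgen i).eq (isGenericPoint_of_minimal hclosed hy hcont hA), fun j ↦ (hgen j).mem⟩
  rw [(hA.1.mapsTo h).image_subset.antisymm (surjOn_of_minimal hclosed hy hcont hA h),
    (hA.1.isClosed j).closure_eq]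
  exact hgen j

end IsClosedSubsystemOver

variable [InverseSystem f] [IsDirected ι (· ≤ ·)] [∀ j, QuasiSober (X j)] [∀ j, T0Space (X j)]
  (hqc : ∀ ⦃i j : ι⦄ (h : i ≤ j) (U : Set (X i)), IsOpen U → IsCompact U →
    IsCompact (f h ⁻¹' U))
  (hclosed : ∀ ⦃i j : ι⦄ (h : i ≤ j), IsClosedMap (f h))
  (hcont : ∀ ⦃i j : ι⦄ (h : i ≤ j), Continuous (f h))
include hqc hclosed hcont

theorem IsClosedSubsystemOver.exists_inverseLimit {i : ι} {y : X i}
    (hbase : ∀ U, IsOpen U → y ∈ U → ∃ V, IsOpen V ∧ IsCompact V ∧ y ∈ V ∧ V ⊆ U)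
    {B : ∀ j, Set (X j)} (hB : IsClosedSubsystemOver f y B) :
    ∃ u : InverseLimit f, InverseLimit.π i u = y ∧ ∀ j, InverseLimit.π j u ∈ B j := by
  have hy (j : ι) (h : i ≤ j) (U : Set (X i)) (hU : IsOpen U) (hyU : y ∈ U) :
      ∃ V ⊆ U, y ∈ V ∧ IsCompact (f h ⁻¹' V) :=
    let ⟨V, hV, hVc, hyV, hVU⟩ := hbase U hU hyU
    ⟨V, hVU, hyV, hqc h V hV hVc⟩
  obtain ⟨A, hAB, hA⟩ := hB.exists_minimal hclosed hy
  obtain ⟨u, hu, huA⟩ := exists_inverseLimit_of_minimal hclosed hy hcont hA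
  exact ⟨u, hu, fun j ↦ hAB j (huA j)⟩

namespace InverseLimit

variable (i : ι)
  (hbase : ∀ (y : X i) U, IsOpen U → y ∈ U → ∃ V, IsOpen V ∧ IsCompact V ∧ y ∈ V ∧ V ⊆ U)
include hbase

theorem surjective_π (hsurj : ∀ ⦃i j : ι⦄ (h : i ≤ j), Function.Surjective (f h)) :
    Function.Surjective (π (f := f) i) := fun y ↦
  let ⟨u, hu, _⟩ := IsClosedSubsystemOver.exists_inverseLimit hqc hclosed hcont (hbase y)
    (B := fun _ ↦ univ)
    ⟨fun _ ↦ isClosed_univ, fun _ _ _ ↦ mapsTo_univ _ _, fun _ h ↦ by simpa using hsurj h y⟩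
  ⟨u, hu⟩

theorem isClosedMap_π [Nonempty ι] : IsClosedMap (π (f := f) i) := by
  intro C hC
  refine closure_subset_iff_isClosed.1 fun y hy ↦ ?_
  have hB : IsClosedSubsystemOver f y fun j ↦ closure (π j '' C) :=
    { isClosed _ := isClosed_closure
      mapsTo _ _ h := ((mapsTo_image _ _).mono_right (image_image_π h C).subset).closure (hcont h)
      mem_image _ h := closure_minimal ((image_image_π h C).symm.subset.trans
        (image_mono subset_closure)) (hclosed h _ isClosed_closure) hy }
  obtain ⟨u, rfl, hu⟩ := hB.exists_inverseLimit hqc hclosed hcont (hbase y)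
  refine mem_image_of_mem _ ?_
  rw [← hC.closure_eq, closure_eq_iInter hcont]
  exact mem_iInter.2 hu

end InverseLimit

end

theorem stmt_7_general {ι : Type*} [Preorder ι] [IsDirected ι (· ≤ ·)] [Nonempty ι]
    (X : ι → Type*) [∀ i, TopologicalSpace (X i)]
    [∀ i, QuasiSober (X i)] [∀ i, T0Space (X i)]
    (hbase : ∀ i (x : X i) (U : Set (X i)), IsOpen U → x ∈ U →
      ∃ V : Set (X i), IsOpen V ∧ IsCompact V ∧ x ∈ V ∧ V ⊆ U)
    (f : ∀ ⦃i j : ι⦄, i ≤ j → X j → X i)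
    (hcont : ∀ ⦃i j : ι⦄ (h : i ≤ j), Continuous (f h))
    (hid : ∀ (i : ι) (x : X i), f (le_refl i) x = x)
    (hcomp : ∀ ⦃i j k : ι⦄ (hij : i ≤ j) (hjk : j ≤ k) (x : X k),
      f hij (f hjk x) = f (hij.trans hjk) x)
    (hqc : ∀ ⦃i j : ι⦄ (h : i ≤ j) (U : Set (X i)), IsOpen U → IsCompact U →
      IsCompact (f h ⁻¹' U))
    (hclosed : ∀ ⦃i j : ι⦄ (h : i ≤ j), IsClosedMap (f h))
    (hsurj : ∀ ⦃i j : ι⦄ (h : i ≤ j), Function.Surjective (f h)) :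
    topologicalKrullDim {u : ∀ j, X j // ∀ ⦃j k : ι⦄ (h : j ≤ k), f h (u k) = u j} =
      ⨆ i, topologicalKrullDim (X i) := by
  have : InverseSystem f := ⟨hid, hcomp⟩
  refine le_antisymm (InverseLimit.topologicalKrullDim_le_iSup hcont) (iSup_le fun i ↦ ?_)
  exact (InverseLimit.isClosedMap_π hqc hclosed hcont i (hbase i)).topologicalKrullDim_le
    (InverseLimit.continuous_π i) (InverseLimit.surjective_π hqc hclosed hcont i (hbase i) hsurj)

/-- Let `{Xᵢ}` be a cofiltered system of spectral spaces whose transition maps are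
surjective, quasi-compact and closed, and let `X = lim Xᵢ`. Then the Krull dimension of `X`
equals the supremum of the Krull dimensions of the `Xᵢ`. -/
theorem stmt_7 {ι : Type*} [Preorder ι] [IsDirected ι (· ≤ ·)] [Nonempty ι]
    (X : ι → Type*) [∀ i, TopologicalSpace (X i)]
    [∀ i, CompactSpace (X i)] [∀ i, QuasiSober (X i)] [∀ i, T0Space (X i)]
    [∀ i, QuasiSeparatedSpace (X i)]
    (hbase : ∀ i (x : X i) (U : Set (X i)), IsOpen U → x ∈ U →
      ∃ V : Set (X i), IsOpen V ∧ IsCompact V ∧ x ∈ V ∧ V ⊆ U)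
    (f : ∀ ⦃i j : ι⦄, i ≤ j → X j → X i)
    (hcont : ∀ ⦃i j : ι⦄ (h : i ≤ j), Continuous (f h))
    (hid : ∀ (i : ι) (x : X i), f (le_refl i) x = x)
    (hcomp : ∀ ⦃i j k : ι⦄ (hij : i ≤ j) (hjk : j ≤ k) (x : X k),
      f hij (f hjk x) = f (hij.trans hjk) x)
    (hqc : ∀ ⦃i j : ι⦄ (h : i ≤ j) (U : Set (X i)), IsOpen U → IsCompact U →
      IsCompact (f h ⁻¹' U))
    (hclosed : ∀ ⦃i j : ι⦄ (h : i ≤ j), IsClosedMap (f h))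
    (hsurj : ∀ ⦃i j : ι⦄ (h : i ≤ j), Function.Surjective (f h)) :
    topologicalKrullDim {u : ∀ j, X j // ∀ ⦃j k : ι⦄ (h : j ≤ k), f h (u k) = u j} =
      ⨆ i, topologicalKrullDim (X i) :=
  stmt_7_general X hbase f hcont hid hcomp hqc hclosed hsurj
end
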